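/- arXiv:2510.09827 — 5 statements merged into one kernel-verified Lean document; each statement's English description precedes it below -/
import Mathlib

section
/- Fix vectors m, v ∈ ℝ^d with all entries of m nonzero, all entries of v nonnegative, and ε > 0. Define the norm ‖θ‖ := ‖Diag((√v + ε)/|m|) θ‖_∞ (entrywise operations). Then the constrained steepest descent step θ' = θ + η·LMO(m) with respect to this norm equals the Adam step θ' = θ − η·m/(√v + ε) (entrywise division). -/
/-- Adam as constrained steepest descent w.r.t. the norm
`‖θ‖ = ‖Diag((√v + ε)/|m|) θ‖_∞`: the CSD step `θ + η • LMO(m)` equals the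
Adam step `θ - η • m/(√v + ε)`. -/
theorem stmt_7 {d : ℕ} [NeZero d] (m v : Fin d → ℝ)
    (hm : ∀ i, m i ≠ 0) (hv : ∀ i, 0 ≤ v i)
    (ε η : ℝ) (hε : 0 < ε) (hη : 0 < η) (θ : Fin d → ℝ) :
    let N : (Fin d → ℝ) → ℝ := fun x =>
      Finset.univ.sup' Finset.univ_nonempty
        (fun i => |((Real.sqrt (v i) + ε) / |m i|) * x i|)
    ∀ l : Fin d → ℝ, N l = 1 →
      (∀ u : Fin d → ℝ, N u = 1 → ∑ i, l i * m i ≤ ∑ i, u i * m i) →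
      θ + η • l = θ - η • (fun i => m i / (Real.sqrt (v i) + ε)) := by
  intro N l hl hmin
  have hs : ∀ i, 0 < Real.sqrt (v i) + ε := fun i => by positivity
  have hms : ∀ i, 0 < |m i| := fun i => abs_pos.mpr (hm i)
  set w : Fin d → ℝ := fun i => -(m i / (Real.sqrt (v i) + ε)) with hw
  have hNw : N w = 1 := by
    have hfun : (fun i => |((Real.sqrt (v i) + ε) / |m i|) * w i|) = fun _ => (1 : ℝ) := by
      funext i
      have h0 : ((Real.sqrt (v i) + ε) / |m i|) * (m i / (Real.sqrt (v i) + ε))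
          = m i / |m i| := by
        rw [div_mul_div_comm, mul_comm (|m i|), mul_div_mul_left _ _ (ne_of_gt (hs i))]
      have h1 : ((Real.sqrt (v i) + ε) / |m i|) * w i = -(m i / |m i|) := by
        simp only [hw, mul_neg, h0]
      rw [h1, abs_neg, abs_div, abs_abs, div_self (ne_of_gt (hms i))]
    simp only [N, hfun, Finset.sup'_const]
  have hwm : ∀ i, w i * m i = -(m i * m i / (Real.sqrt (v i) + ε)) := by
    intro i; simp only [hw]; ring
  have hle : ∀ i ∈ Finset.univ, w i * m i ≤ l i * m i := by
    intro i _
    have hbound : |((Real.sqrt (v i) + ε) / |m i|) * l i| ≤ 1 := by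
      simp only [N] at hl
      rw [← hl]
      exact Finset.le_sup' (fun j => |((Real.sqrt (v j) + ε) / |m j|) * l j|)
        (Finset.mem_univ i)
    have hci : 0 < (Real.sqrt (v i) + ε) / |m i| := div_pos (hs i) (hms i)
    rw [abs_mul, abs_of_pos hci, div_mul_eq_mul_div, div_le_one (hms i)] at hbound
    have h2 : -(|l i| * |m i|) ≤ l i * m i := by
      rw [← abs_mul]; exact neg_abs_le _
    have h3 : |l i| * |m i| ≤ m i * m i / (Real.sqrt (v i) + ε) := by
      rw [le_div_iff₀ (hs i), ← abs_mul_abs_self (m i)]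
      calc |l i| * |m i| * (Real.sqrt (v i) + ε)
          = (Real.sqrt (v i) + ε) * |l i| * |m i| := by ring
        _ ≤ |m i| * |m i| := by
            exact mul_le_mul_of_nonneg_right hbound (le_of_lt (hms i))
    rw [hwm i]
    linarith
  have hsum : ∑ i, l i * m i = ∑ i, w i * m i :=
    le_antisymm (hmin w hNw) (Finset.sum_le_sum hle)
  have heq : ∀ i, l i * m i = w i * m i := by
    intro i
    have := (Finset.sum_eq_sum_iff_of_le hle).mp hsum.symm
    exact (this i (Finset.mem_univ i)).symm
  have hlw : ∀ i, l i = w i := fun i => mul_right_cancel₀ (hm i) (heq i)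
  funext i
  simp only [Pi.add_apply, Pi.sub_apply, Pi.smul_apply, smul_eq_mul, hlw i, hw]
  ring
end

section
/- Fix v ∈ ℝ^d with nonnegative entries and ε > 0, and define the norm ‖θ‖ := ‖Diag(√(√v + ε)) θ‖₂. Then for any m ∈ ℝ^d and η > 0, the regularized steepest descent step θ' = θ + η‖m‖_*·LMO(m) with respect to this norm equals θ' = θ − η·m/(√v + ε) (entrywise division), i.e., the Adam step. -/
/-- Adam as regularized steepest descent w.r.t. `‖θ‖ = ‖Diag(√(√v + ε)) θ‖₂`:
the RSD step `θ + η ‖m‖_* • LMO(m)` equals the Adam step `θ - η • m/(√v + ε)`. -/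
theorem stmt_8 {d : ℕ} (v : Fin d → ℝ) (hv : ∀ i, 0 ≤ v i)
    (ε η : ℝ) (hε : 0 < ε) (hη : 0 < η)
    (m : Fin d → ℝ) (hm : m ≠ 0) (θ : Fin d → ℝ) :
    let N : (Fin d → ℝ) → ℝ := fun x =>
      Real.sqrt (∑ i, (Real.sqrt (Real.sqrt (v i) + ε) * x i) ^ 2)
    ∀ (s : ℝ) (l : Fin d → ℝ),
      IsGreatest {r : ℝ | ∃ u : Fin d → ℝ, N u = 1 ∧ ∑ i, u i * m i = r} s →
      N l = 1 →
      (∀ u : Fin d → ℝ, N u = 1 → ∑ i, l i * m i ≤ ∑ i, u i * m i) →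
      θ + (η * s) • l = θ - η • (fun i => m i / (Real.sqrt (v i) + ε)) := by
  intro N s l hs hl hmin
  set a : Fin d → ℝ := fun i => Real.sqrt (Real.sqrt (v i) + ε) with ha_def
  have hvp : ∀ i, 0 < Real.sqrt (v i) + ε := fun i => by
    have := Real.sqrt_nonneg (v i); linarith
  have hap : ∀ i, 0 < a i := fun i => Real.sqrt_pos.2 (hvp i)
  have ha2 : ∀ i, a i ^ 2 = Real.sqrt (v i) + ε := fun i =>
    Real.sq_sqrt (hvp i).le
  have hNdef : ∀ x : Fin d → ℝ, N x = Real.sqrt (∑ i, (a i * x i) ^ 2) :=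
    fun x => rfl
  set c : ℝ := Real.sqrt (∑ i, (m i / a i) ^ 2) with hc_def
  have hsum_nonneg : 0 ≤ ∑ i, (m i / a i) ^ 2 :=
    Finset.sum_nonneg fun i _ => sq_nonneg _
  have hc2 : c ^ 2 = ∑ i, (m i / a i) ^ 2 := Real.sq_sqrt hsum_nonneg
  have hcpos : 0 < c := by
    obtain ⟨j, hj⟩ := Function.ne_iff.1 hm
    have hjpos : 0 < (m j / a j) ^ 2 := by
      have : m j / a j ≠ 0 := div_ne_zero hj (hap j).ne'
      positivity
    exact Real.sqrt_pos.2 (lt_of_lt_of_le hjpos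
      (Finset.single_le_sum (fun i _ => sq_nonneg (m i / a i)) (Finset.mem_univ j)))
  have hN1 : ∀ u : Fin d → ℝ, N u = 1 → ∑ i, (a i * u i) ^ 2 = 1 := by
    intro u hu
    rw [hNdef] at hu
    exact Real.sqrt_eq_one.1 hu
  -- expansion identity
  have expand : ∀ u : Fin d → ℝ, ∑ i, (c * (a i * u i) - m i / a i) ^ 2
      = c ^ 2 * (∑ i, (a i * u i) ^ 2) - 2 * c * (∑ i, u i * m i) + c ^ 2 := by
    intro u
    have h1 : ∀ i : Fin d, (c * (a i * u i) - m i / a i) ^ 2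
        = c ^ 2 * (a i * u i) ^ 2 - 2 * c * (u i * m i) + (m i / a i) ^ 2 := by
      intro i
      have hne : a i ≠ 0 := (hap i).ne'
      field_simp
      ring
    calc ∑ i, (c * (a i * u i) - m i / a i) ^ 2
        = ∑ i, (c ^ 2 * (a i * u i) ^ 2 - 2 * c * (u i * m i) + (m i / a i) ^ 2) :=
          Finset.sum_congr rfl (fun i _ => h1 i)
      _ = c ^ 2 * (∑ i, (a i * u i) ^ 2) - 2 * c * (∑ i, u i * m i)
            + ∑ i, (m i / a i) ^ 2 := by
          rw [Finset.sum_add_distrib, Finset.sum_sub_distrib,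
            ← Finset.mul_sum, ← Finset.mul_sum]
      _ = _ := by rw [← hc2]
  -- upper bound: any admissible u has ⟨u,m⟩ ≤ c
  have upper : ∀ u : Fin d → ℝ, ∑ i, (a i * u i) ^ 2 = 1 → ∑ i, u i * m i ≤ c := by
    intro u hu
    have h0 : 0 ≤ ∑ i, (c * (a i * u i) - m i / a i) ^ 2 :=
      Finset.sum_nonneg fun i _ => sq_nonneg _
    rw [expand u, hu] at h0
    nlinarith
  -- the candidate up = m/(a² c)
  set up : Fin d → ℝ := fun i => m i / (a i ^ 2) / c with hu_def
  have hupa : ∀ i, (a i * up i) ^ 2 = (m i / a i) ^ 2 / c ^ 2 := by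
    intro i
    have hne : a i ≠ 0 := (hap i).ne'
    have h1 : a i ^ 4 * (a i)⁻¹ ^ 4 = 1 := by
      rw [← mul_pow, mul_inv_cancel₀ hne, one_pow]
    have h2 : c ^ 2 * c⁻¹ ^ 2 = 1 := by
      rw [← mul_pow, mul_inv_cancel₀ hcpos.ne', one_pow]
    field_simp [hne, hcpos.ne']
    linear_combination (m i ^ 2 * c ^ 2 * c⁻¹ ^ 2) * h1 + m i ^ 2 * h2
  have hupsum : ∑ i, (a i * up i) ^ 2 = 1 := by
    simp only [hupa]
    rw [← Finset.sum_div, ← hc2]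
    field_simp
  have hupval : ∑ i, up i * m i = c := by
    have h1 : ∀ i : Fin d, up i * m i = (m i / a i) ^ 2 / c := by
      intro i
      have hne : a i ≠ 0 := (hap i).ne'
      have h1 : a i ^ 2 * (a i)⁻¹ ^ 2 = 1 := by
        rw [← mul_pow, mul_inv_cancel₀ hne, one_pow]
      have h2 : c * c⁻¹ = 1 := mul_inv_cancel₀ hcpos.ne'
      field_simp [hne, hcpos.ne']
      linear_combination (m i ^ 2 * c * c⁻¹) * h1 + m i ^ 2 * h2
    rw [Finset.sum_congr rfl (fun i _ => h1 i), ← Finset.sum_div, ← hc2]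
    field_simp
  have hNup : N up = 1 := by rw [hNdef]; exact Real.sqrt_eq_one.2 hupsum
  -- s = c
  have hsc : s = c := by
    have h1 : c ≤ s := hs.2 ⟨up, hNup, hupval⟩
    obtain ⟨u₀, hu₀N, hu₀v⟩ := hs.1
    have h2 : s ≤ c := hu₀v ▸ upper u₀ (hN1 u₀ hu₀N)
    linarith
  -- the candidate -up shows ⟨l,m⟩ ≤ -c
  have hNun : N (-up) = 1 := by
    rw [hNdef]
    apply Real.sqrt_eq_one.2
    calc ∑ i, (a i * (-up) i) ^ 2 = ∑ i, (a i * up i) ^ 2 := by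
          apply Finset.sum_congr rfl; intro i _; simp [Pi.neg_apply]
      _ = 1 := hupsum
  have hlm : ∑ i, l i * m i ≤ -c := by
    have := hmin (-up) hNun
    have h2 : ∑ i, (-up) i * m i = -c := by
      rw [← hupval, ← Finset.sum_neg_distrib]
      apply Finset.sum_congr rfl; intro i _; simp
    linarith [this, h2 ▸ this]
  -- equality case: the sum of squares for -l is zero
  have hlsum : ∑ i, (a i * l i) ^ 2 = 1 := hN1 l hl
  have hlsum' : ∑ i, (a i * (-l) i) ^ 2 = 1 := by
    calc ∑ i, (a i * (-l) i) ^ 2 = ∑ i, (a i * l i) ^ 2 := by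
          apply Finset.sum_congr rfl; intro i _; simp [Pi.neg_apply]
      _ = 1 := hlsum
  have hnegl : ∑ i, (-l) i * m i = - ∑ i, l i * m i := by
    rw [← Finset.sum_neg_distrib]
    apply Finset.sum_congr rfl; intro i _; simp
  have hzero : ∑ i, (c * (a i * (-l) i) - m i / a i) ^ 2 = 0 := by
    have h0 : 0 ≤ ∑ i, (c * (a i * (-l) i) - m i / a i) ^ 2 :=
      Finset.sum_nonneg fun i _ => sq_nonneg _
    have he := expand (-l)
    rw [hlsum', hnegl] at he
    nlinarith
  have hterm : ∀ i : Fin d, c * (a i * (-l) i) - m i / a i = 0 := by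
    intro i
    have := (Finset.sum_eq_zero_iff_of_nonneg
      (fun i _ => sq_nonneg (c * (a i * (-l) i) - m i / a i))).1 hzero i
      (Finset.mem_univ i)
    exact (pow_eq_zero_iff two_ne_zero).1 this
  -- conclude
  funext i
  have hi := hterm i
  have hne : a i ≠ 0 := (hap i).ne'
  have hcl : c * l i = - (m i / (Real.sqrt (v i) + ε)) := by
    rw [← ha2 i]
    have hlneg : (-l) i = - l i := rfl
    rw [hlneg] at hi
    field_simp at hi ⊢
    nlinarith [hi]
  simp only [Pi.add_apply, Pi.sub_apply, Pi.smul_apply, smul_eq_mul, hsc]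
  rw [show η * c * l i = η * (c * l i) by ring, hcl]
  ring
end

section
/- Let ‖·‖ be a norm on ℝ^d, m ≠ 0, η > 0, and F̃, F_* ∈ ℝ with F̃ ≥ F_*. Among all minimizers of w ↦ max(F̃ + ⟨m, w − w₀⟩, F_*) over the ball {w : ‖w − w₀‖ ≤ η}, the one closest to w₀ is w₀ + min(η, (F̃ − F_*)/‖m‖_*)·LMO(m). -/
/-- Constrained Momo: among the minimizers of
`w ↦ max(F̃ + ⟨m, w - w₀⟩, F_*)` over the ball `{w : ‖w - w₀‖ ≤ η}`, the one
closest to `w₀` is `w₀ + min(η, (F̃ - F_*)/‖m‖_*) • LMO(m)`. -/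
theorem stmt_11 {d : ℕ} (N : (Fin d → ℝ) → ℝ)
    (hN0 : ∀ x, N x = 0 ↔ x = 0)
    (hN1 : ∀ (a : ℝ) x, N (a • x) = |a| * N x)
    (hN2 : ∀ x y, N (x + y) ≤ N x + N y)
    (m w₀ : Fin d → ℝ) (hm : m ≠ 0) (η : ℝ) (hη : 0 < η)
    (Ft Fs : ℝ) (hF : Fs ≤ Ft)
    (s : ℝ)
    (hs : IsGreatest {r : ℝ | ∃ u : Fin d → ℝ, N u = 1 ∧ ∑ i, u i * m i = r} s)
    (l : Fin d → ℝ) (hl1 : N l = 1)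
    (hl2 : ∀ u : Fin d → ℝ, N u = 1 → ∑ i, l i * m i ≤ ∑ i, u i * m i) :
    let φ : (Fin d → ℝ) → ℝ := fun w => max (Ft + ∑ i, m i * (w - w₀) i) Fs
    let p : Fin d → ℝ := w₀ + (min η ((Ft - Fs) / s)) • l
    N (p - w₀) ≤ η ∧
      (∀ w : Fin d → ℝ, N (w - w₀) ≤ η → φ p ≤ φ w) ∧
      ∀ w : Fin d → ℝ, N (w - w₀) ≤ η →
        (∀ w' : Fin d → ℝ, N (w' - w₀) ≤ η → φ w ≤ φ w') →
        N (p - w₀) ≤ N (w - w₀) := by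
  intro φ p
  have hN0' : N (0 : Fin d → ℝ) = 0 := (hN0 0).mpr rfl
  have hNneg : ∀ x : Fin d → ℝ, N (-x) = N x := by
    intro x
    have h := hN1 (-1) x
    simpa using h
  have hNnn : ∀ x, 0 ≤ N x := by
    intro x
    have h := hN2 x (-x)
    rw [add_neg_cancel, hN0', hNneg] at h
    linarith
  have hNm : 0 < N m := by
    have hne : N m ≠ 0 := fun h => hm ((hN0 m).mp h)
    exact lt_of_le_of_ne (hNnn m) (Ne.symm hne)
  have hmm : 0 < ∑ i, m i * m i := by
    obtain ⟨i, hi⟩ := Function.ne_iff.mp hm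
    have hi' : m i ≠ 0 := by simpa using hi
    exact Finset.sum_pos' (fun j _ => mul_self_nonneg (m j))
      ⟨i, Finset.mem_univ i, mul_self_pos.mpr hi'⟩
  have hspos : 0 < s := by
    have hu : N ((N m)⁻¹ • m) = 1 := by
      rw [hN1, abs_of_pos (inv_pos.mpr hNm)]
      field_simp
    have hval : ∑ i, ((N m)⁻¹ • m) i * m i = (N m)⁻¹ * ∑ i, m i * m i := by
      rw [Finset.mul_sum]
      exact Finset.sum_congr rfl (fun i _ => by simp [mul_assoc])
    have hle : (N m)⁻¹ * ∑ i, m i * m i ≤ s := hs.2 ⟨_, hu, hval⟩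
    have : 0 < (N m)⁻¹ * ∑ i, m i * m i := by positivity
    linarith
  have key : ∀ v : Fin d → ℝ, |∑ i, m i * v i| ≤ s * N v := by
    intro v
    by_cases hv : v = 0
    · simp [hv, hN0']
    · have hNv : 0 < N v := by
        have hne : N v ≠ 0 := fun h => hv ((hN0 v).mp h)
        exact lt_of_le_of_ne (hNnn v) (Ne.symm hne)
      have hu : N ((N v)⁻¹ • v) = 1 := by
        rw [hN1, abs_of_pos (inv_pos.mpr hNv)]
        field_simp
      have hsum : ∑ i, ((N v)⁻¹ • v) i * m i = (N v)⁻¹ * ∑ i, m i * v i := by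
        rw [Finset.mul_sum]
        exact Finset.sum_congr rfl (fun i _ => by simp; ring)
      have h1 : (N v)⁻¹ * ∑ i, m i * v i ≤ s := hs.2 ⟨_, hu, hsum⟩
      have hnu : N (-((N v)⁻¹ • v)) = 1 := by rw [hNneg]; exact hu
      have hsum2 : ∑ i, (-((N v)⁻¹ • v)) i * m i = -((N v)⁻¹ * ∑ i, m i * v i) := by
        rw [← hsum, ← Finset.sum_neg_distrib]
        exact Finset.sum_congr rfl (fun i _ => by simp)
      have h2 : -((N v)⁻¹ * ∑ i, m i * v i) ≤ s := hs.2 ⟨_, hnu, hsum2⟩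
      have habs : |(N v)⁻¹ * ∑ i, m i * v i| ≤ s := abs_le.mpr ⟨by linarith, h1⟩
      rw [abs_mul, abs_of_pos (inv_pos.mpr hNv)] at habs
      rw [inv_mul_le_iff₀ hNv] at habs
      linarith [habs]
  have hlm : ∑ i, l i * m i = -s := by
    obtain ⟨u, hu1, hu2⟩ := hs.1
    have hnu : N (-u) = 1 := by rw [hNneg]; exact hu1
    have h1 : ∑ i, l i * m i ≤ -s := by
      have h := hl2 (-u) hnu
      have : ∑ i, (-u) i * m i = -s := by
        rw [← hu2, ← Finset.sum_neg_distrib]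
        exact Finset.sum_congr rfl (fun i _ => by simp)
      linarith [h.trans_eq this]
    have hnl : N (-l) = 1 := by rw [hNneg]; exact hl1
    have h2 : -∑ i, l i * m i ≤ s := by
      have h := hs.2 ⟨-l, hnl, rfl⟩
      have : ∑ i, (-l) i * m i = -∑ i, l i * m i := by
        rw [← Finset.sum_neg_distrib]
        exact Finset.sum_congr rfl (fun i _ => by simp)
      linarith [this ▸ h]
    linarith
  set t := min η ((Ft - Fs) / s) with ht
  have ht0 : 0 ≤ t := le_min hη.le (div_nonneg (by linarith) hspos.le)
  have htη : t ≤ η := min_le_left _ _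
  have hts : t * s ≤ Ft - Fs := by
    have := min_le_right η ((Ft - Fs) / s)
    calc t * s ≤ (Ft - Fs) / s * s := by nlinarith
      _ = Ft - Fs := div_mul_cancel₀ _ hspos.ne'
  have hp : p - w₀ = t • l := by
    show w₀ + t • l - w₀ = t • l
    abel
  have hNp : N (p - w₀) = t := by
    rw [hp, hN1, hl1, abs_of_nonneg ht0, mul_one]
  have hsum_p : ∑ i, m i * (p - w₀) i = -(t * s) := by
    rw [hp]
    have : ∑ i, m i * (t • l) i = t * ∑ i, l i * m i := by
      rw [Finset.mul_sum]
      exact Finset.sum_congr rfl (fun i _ => by simp; ring)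
    rw [this, hlm]; ring
  have hφp : φ p = Ft - t * s := by
    show max (Ft + ∑ i, m i * (p - w₀) i) Fs = Ft - t * s
    rw [hsum_p]
    rw [max_eq_left (by linarith)]
    ring
  refine ⟨by rw [hNp]; exact htη, ?_, ?_⟩
  · intro w hw
    have hb := key (w - w₀)
    have hb2 : s * N (w - w₀) ≤ s * η := mul_le_mul_of_nonneg_left hw hspos.le
    have hl1' : Ft + ∑ i, m i * (w - w₀) i ≤ φ w := le_max_left _ _
    have hl2' : Fs ≤ φ w := le_max_right _ _
    rw [hφp]
    rcases le_total η ((Ft - Fs) / s) with h | h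
    · have : t = η := min_eq_left h
      rw [this]
      have := neg_abs_le (∑ i, m i * (w - w₀) i)
      linarith
    · have : t = (Ft - Fs) / s := min_eq_right h
      rw [this, div_mul_cancel₀ _ hspos.ne']
      linarith
  · intro w hw hmin
    have hpball : N (p - w₀) ≤ η := by rw [hNp]; exact htη
    have h1 : φ w ≤ φ p := hmin p hpball
    rw [hφp] at h1
    have h2 : Ft + ∑ i, m i * (w - w₀) i ≤ φ w := le_max_left _ _
    have h3 := key (w - w₀)
    have := neg_abs_le (∑ i, m i * (w - w₀) i)
    have hts' : t * s ≤ s * N (w - w₀) := by linarith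
    rw [hNp]
    nlinarith [hspos]
end

section
/- Let ‖·‖ be a norm on ℝ^d, m ≠ 0, η > 0, and F̃ ≥ F_*. The unique minimizer of w ↦ max(F̃ + ⟨m, w − w₀⟩, F_*) + (1/(2η))‖w − w₀‖² is w₀ + min(η, (F̃ − F_*)/‖m‖_*²)·‖m‖_*·LMO(m). -/
/-!
With `t = min(η, (F̃ - F_*)/‖m‖_*²)`, the bound `⟨m, w - w₀⟩ ≥ -‖m‖_* ‖w - w₀‖`, attained along
`LMO(m)`, shows that the objective is at least `f ‖w - w₀‖` for the one-dimensional function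
`f r = max (F̃ - ‖m‖_* r) F_* + r² / (2η)`, and equals `f (t ‖m‖_*)` at the candidate.
To see that `t ‖m‖_*` minimizes `f`, bound the max from below by its convex combination with weight
`t / η`: the resulting quadratic is minimized at `r = t ‖m‖_*`, and it touches `f` there because
`(η - t) (F̃ - F_* - t ‖m‖_*²) = 0` (complementary slackness). If `‖m‖_* = 0` then `t = 0`, as
division by zero gives zero, and the candidate is `w₀`, where `f` is clearly least.
-/

open Matrix

section Seminorm

variable {E : Type*} [AddCommGroup E] [Module ℝ E] {N : E → ℝ}

theorem neg_invariant_of_abs_homogeneous (hN1 : ∀ (a : ℝ) x, N (a • x) = |a| * N x) (x : E) :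
    N (-x) = N x := by
  simpa using hN1 (-1) x

theorem nonneg_of_abs_homogeneous_of_subadditive (hN1 : ∀ (a : ℝ) x, N (a • x) = |a| * N x)
    (hN2 : ∀ x y, N (x + y) ≤ N x + N y) (x : E) : 0 ≤ N x := by
  have h := hN2 x (-x)
  rw [add_neg_cancel, neg_invariant_of_abs_homogeneous hN1] at h
  have hN0 : N 0 = 0 := by simpa using hN1 0 x
  linarith

end Seminorm

section DualNorm

variable {ι : Type*} [Fintype ι] {N : (ι → ℝ) → ℝ} {m : ι → ℝ} {s : ℝ}

theorem dotProduct_le_mul_of_isGreatest (hN0 : ∀ x, N x = 0 ↔ x = 0)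
    (hN1 : ∀ (a : ℝ) x, N (a • x) = |a| * N x) (hN2 : ∀ x y, N (x + y) ≤ N x + N y)
    (hs : IsGreatest {r : ℝ | ∃ u, N u = 1 ∧ u ⬝ᵥ m = r} s) (v : ι → ℝ) :
    v ⬝ᵥ m ≤ s * N v := by
  obtain rfl | hv := eq_or_ne v 0
  · simp [(hN0 0).2 rfl]
  have hNv : 0 < N v :=
    (nonneg_of_abs_homogeneous_of_subadditive hN1 hN2 v).lt_of_ne' (mt (hN0 v).1 hv)
  have hunit : N ((N v)⁻¹ • v) = 1 := by
    rw [hN1, abs_of_pos (inv_pos.2 hNv), inv_mul_cancel₀ hNv.ne']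
  have h := hs.2 ⟨_, hunit, rfl⟩
  rw [smul_dotProduct, smul_eq_mul, inv_mul_le_iff₀ hNv] at h
  linarith

theorem dotProduct_eq_neg_of_isGreatest (hN1 : ∀ (a : ℝ) x, N (a • x) = |a| * N x)
    (hs : IsGreatest {r : ℝ | ∃ u, N u = 1 ∧ u ⬝ᵥ m = r} s) {l : ι → ℝ} (hl1 : N l = 1)
    (hl2 : ∀ u, N u = 1 → l ⬝ᵥ m ≤ u ⬝ᵥ m) : l ⬝ᵥ m = -s := by
  have hneg : ∀ {u}, N u = 1 → N (-u) = 1 := fun hu => by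
    rw [neg_invariant_of_abs_homogeneous hN1, hu]
  obtain ⟨u, hu1, rfl⟩ := hs.1
  have hle : l ⬝ᵥ m ≤ (-u) ⬝ᵥ m := hl2 _ (hneg hu1)
  have hge : (-l) ⬝ᵥ m ≤ u ⬝ᵥ m := hs.2 ⟨_, hneg hl1, rfl⟩
  rw [neg_dotProduct] at hle hge
  linarith

end DualNorm

section ScalarProblem

variable {η Ft Fs s t : ℝ}

theorem sub_mul_sub_eq_zero_of_eq_min (hs : s ≠ 0) (ht : t = min η ((Ft - Fs) / s ^ 2)) :
    (η - t) * (Ft - Fs - t * s ^ 2) = 0 := by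
  rcases min_cases η ((Ft - Fs) / s ^ 2) with ⟨h, -⟩ | ⟨h, -⟩ <;> rw [h] at ht <;> subst ht
  · simp
  · rw [div_mul_cancel₀ _ (pow_ne_zero 2 hs)]
    simp

theorem max_sub_add_sq_le (hη : 0 < η) (hF : Fs ≤ Ft) (hs : 0 ≤ s)
    (ht : t = min η ((Ft - Fs) / s ^ 2)) (r : ℝ) :
    max (Ft - s * (t * s)) Fs + 1 / (2 * η) * (t * s) ^ 2 ≤
      max (Ft - s * r) Fs + 1 / (2 * η) * r ^ 2 := by
  obtain rfl | hs := hs.eq_or_lt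
  · have : 0 ≤ 1 / (2 * η) * r ^ 2 := by positivity
    simpa using this
  have ht0 : 0 ≤ t := ht ▸ le_min hη.le (div_nonneg (sub_nonneg.2 hF) (sq_nonneg s))
  have htη : t ≤ η := ht ▸ min_le_left _ _
  have hts : t * s ^ 2 ≤ Ft - Fs := by
    rw [← le_div_iff₀ (by positivity)]
    exact ht ▸ min_le_right _ _
  have hslack := sub_mul_sub_eq_zero_of_eq_min hs.ne' ht
  have hcombo : t / η * (Ft - s * r) + (1 - t / η) * Fs ≤ max (Ft - s * r) Fs :=
    Convex.combo_le_max _ _ (div_nonneg ht0 hη.le)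
      (sub_nonneg.2 ((div_le_one hη).2 htη)) (add_sub_cancel _ _)
  rw [max_eq_left (by nlinarith)]
  have hgap : Ft - s * (t * s) + 1 / (2 * η) * (t * s) ^ 2 ≤
      t / η * (Ft - s * r) + (1 - t / η) * Fs + 1 / (2 * η) * r ^ 2 := by
    have key : (t / η * (Ft - s * r) + (1 - t / η) * Fs + 1 / (2 * η) * r ^ 2) -
        (Ft - s * (t * s) + 1 / (2 * η) * (t * s) ^ 2) =
        ((r - t * s) ^ 2 / 2 - (η - t) * (Ft - Fs - t * s ^ 2)) / η := by
      field_simp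
      ring
    rw [← sub_nonneg, key, hslack, sub_zero]
    positivity
  linarith

end ScalarProblem

theorem stmt_12_general {d : ℕ} (N : (Fin d → ℝ) → ℝ)
    (hN0 : ∀ x, N x = 0 ↔ x = 0)
    (hN1 : ∀ (a : ℝ) x, N (a • x) = |a| * N x)
    (hN2 : ∀ x y, N (x + y) ≤ N x + N y)
    (m w₀ : Fin d → ℝ) (η : ℝ) (hη : 0 < η)
    (Ft Fs : ℝ) (hF : Fs ≤ Ft)
    (s : ℝ)
    (hs : IsGreatest {r : ℝ | ∃ u : Fin d → ℝ, N u = 1 ∧ ∑ i, u i * m i = r} s)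
    (l : Fin d → ℝ) (hl1 : N l = 1)
    (hl2 : ∀ u : Fin d → ℝ, N u = 1 → ∑ i, l i * m i ≤ ∑ i, u i * m i) :
    let φ : (Fin d → ℝ) → ℝ := fun w =>
      max (Ft + ∑ i, m i * (w - w₀) i) Fs + (1 / (2 * η)) * (N (w - w₀)) ^ 2
    let p : Fin d → ℝ := w₀ + ((min η ((Ft - Fs) / s ^ 2)) * s) • l
    ∀ w : Fin d → ℝ, φ p ≤ φ w := by
  intro φ p w
  set t := min η ((Ft - Fs) / s ^ 2) with ht
  have hlm : l ⬝ᵥ m = -s := dotProduct_eq_neg_of_isGreatest hN1 hs hl1 hl2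
  have hdual : ∀ v, v ⬝ᵥ m ≤ s * N v := dotProduct_le_mul_of_isGreatest hN0 hN1 hN2 hs
  have hs0 : 0 ≤ s := by
    obtain ⟨u, hu1, hu : u ⬝ᵥ m = s⟩ := hs.1
    have := hdual (-u)
    rw [neg_dotProduct, hu, neg_invariant_of_abs_homogeneous hN1, hu1] at this
    linarith
  have hts : 0 ≤ t * s := mul_nonneg (le_min hη.le (by positivity)) hs0
  have hpw : p - w₀ = (t * s) • l := add_sub_cancel_left _ _
  calc φ p = max (Ft - s * (t * s)) Fs + 1 / (2 * η) * (t * s) ^ 2 := by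
        change max (Ft + m ⬝ᵥ (p - w₀)) Fs + _ = _
        rw [hpw, hN1, hl1, dotProduct_smul, dotProduct_comm, hlm, abs_of_nonneg hts]
        ring_nf
    _ ≤ max (Ft - s * N (w - w₀)) Fs + 1 / (2 * η) * N (w - w₀) ^ 2 :=
        max_sub_add_sq_le hη hF hs0 ht _
    _ ≤ φ w := by
        have := hdual (-(w - w₀))
        rw [neg_dotProduct, neg_invariant_of_abs_homogeneous hN1, dotProduct_comm] at this
        change _ ≤ max (Ft + m ⬝ᵥ (w - w₀)) Fs + _
        gcongr
        linarith

/-- Regularized Momo: the point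
`w₀ + min(η, (F̃ - F_*)/‖m‖_*²) ‖m‖_* • LMO(m)` minimizes
`w ↦ max(F̃ + ⟨m, w - w₀⟩, F_*) + ‖w - w₀‖²/(2η)`. -/
theorem stmt_12 {d : ℕ} (N : (Fin d → ℝ) → ℝ)
    (hN0 : ∀ x, N x = 0 ↔ x = 0)
    (hN1 : ∀ (a : ℝ) x, N (a • x) = |a| * N x)
    (hN2 : ∀ x y, N (x + y) ≤ N x + N y)
    (m w₀ : Fin d → ℝ) (hm : m ≠ 0) (η : ℝ) (hη : 0 < η)
    (Ft Fs : ℝ) (hF : Fs ≤ Ft)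
    (s : ℝ)
    (hs : IsGreatest {r : ℝ | ∃ u : Fin d → ℝ, N u = 1 ∧ ∑ i, u i * m i = r} s)
    (l : Fin d → ℝ) (hl1 : N l = 1)
    (hl2 : ∀ u : Fin d → ℝ, N u = 1 → ∑ i, l i * m i ≤ ∑ i, u i * m i) :
    let φ : (Fin d → ℝ) → ℝ := fun w =>
      max (Ft + ∑ i, m i * (w - w₀) i) Fs + (1 / (2 * η)) * (N (w - w₀)) ^ 2
    let p : Fin d → ℝ := w₀ + ((min η ((Ft - Fs) / s ^ 2)) * s) • l
    ∀ w : Fin d → ℝ, φ p ≤ φ w :=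
  stmt_12_general N hN0 hN1 hN2 m w₀ η hη Ft Fs hF s hs l hl1 hl2
end

section
/- Let h(W¹,…,W^L, θ) = sqrt((max_ℓ g_ℓ(W^ℓ))² + λ·q(θ)²) for norms g_ℓ, q and λ > 0 (the MuonMax norm with λ = η_m/η_b). Then h is a norm and its dual norm is h_*(M¹,…,M^L, m) = sqrt((Σ_ℓ g_{ℓ,*}(M^ℓ))² + (1/λ)·q_*(m)²). -/
/-!
`h` is a `λ`-weighted `ℓ²` combination of two norms, the first of which is the `ℓ∞` combination
of the `g_ℓ`; both constructions preserve the norm axioms. Dualising one step at a time: the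
dual of a maximum of norms is the sum of the dual norms, because maximisers `u_ℓ` of the blocks
can be chosen independently and together have sup-norm `1`; the dual of `√(a² + λ b²)` is
`√(α² + β²/λ)` by the weighted Cauchy–Schwarz inequality, with equality at `(α u, (β/λ) v)`
for maximisers `u`, `v` of the two factors.
-/
open Finset

structure IsNorm {E : Type*} [AddCommGroup E] [Module ℝ E] (f : E → ℝ) : Prop where
  eq_zero_iff : ∀ x, f x = 0 ↔ x = 0
  map_smul : ∀ (a : ℝ) x, f (a • x) = |a| * f x
  map_add_le : ∀ x y, f (x + y) ≤ f x + f y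

/-- `φ` plays the role of the pairing `u ↦ ⟨u, M⟩` with a dual vector `M`, and `r` that of the
dual norm of `M`. -/
def HasDualNorm {E : Type*} (f φ : E → ℝ) (r : ℝ) : Prop :=
  IsGreatest {s | ∃ u, f u = 1 ∧ φ u = s} r

section DualNorm

variable {E : Type*} [AddCommGroup E] [Module ℝ E] {f φ : E → ℝ} {r : ℝ}

namespace IsNorm

theorem map_zero (hf : IsNorm f) : f 0 = 0 := by
  simpa using hf.map_smul 0 0

theorem map_neg (hf : IsNorm f) (x : E) : f (-x) = f x := by
  simpa using hf.map_smul (-1) x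

theorem nonneg (hf : IsNorm f) (x : E) : 0 ≤ f x := by
  have := hf.map_add_le x (-x)
  rw [add_neg_cancel, hf.map_zero, hf.map_neg] at this
  linarith

end IsNorm

namespace HasDualNorm

theorem le_mul (hf : IsNorm f) (hφ : ∀ (c : ℝ) u, φ (c • u) = c * φ u)
    (hr : HasDualNorm f φ r) (u : E) : φ u ≤ f u * r := by
  rcases (hf.nonneg u).eq_or_lt with hu | hu
  · have hφ0 : φ 0 = 0 := by simpa using hφ 0 0
    rw [← hu, (hf.eq_zero_iff u).1 hu.symm, hφ0, zero_mul]
  · have hunit : f ((f u)⁻¹ • u) = 1 := by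
      rw [hf.map_smul, abs_of_pos (inv_pos.2 hu), inv_mul_cancel₀ hu.ne']
    have := hr.2 ⟨_, hunit, rfl⟩
    rw [hφ] at this
    calc φ u = f u * ((f u)⁻¹ * φ u) := by field_simp
      _ ≤ f u * r := by gcongr

theorem nonneg (hf : IsNorm f) (hφ : ∀ (c : ℝ) u, φ (c • u) = c * φ u)
    (hr : HasDualNorm f φ r) : 0 ≤ r := by
  obtain ⟨u, hu, hφu⟩ := hr.1
  have := hr.le_mul hf hφ (-u)
  rw [← neg_one_smul ℝ u, hφ, hf.map_smul, hu, hφu] at this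
  norm_num at this
  linarith

theorem of_le_of_eq (hf : IsNorm f) (hφ : ∀ (c : ℝ) u, φ (c • u) = c * φ u)
    (hle : ∀ u, φ u ≤ f u * r) {u : E} (hu : f u ≠ 0) (heq : φ u = f u * r) :
    HasDualNorm f φ r := by
  have hpos : 0 < f u := (hf.nonneg u).lt_of_ne' hu
  refine ⟨⟨(f u)⁻¹ • u, ?_, ?_⟩, ?_⟩
  · rw [hf.map_smul, abs_of_pos (inv_pos.2 hpos), inv_mul_cancel₀ hu]
  · rw [hφ, heq, inv_mul_cancel_left₀ hu]
  · rintro s ⟨w, hw, rfl⟩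
    simpa [hw] using hle w

end HasDualNorm

end DualNorm

theorem Real.mul_add_mul_le_sqrt_mul_sqrt {lam : ℝ} (hlam : 0 < lam) (x y a b : ℝ) :
    x * a + y * b ≤ √(x ^ 2 + lam * y ^ 2) * √(a ^ 2 + (1 / lam) * b ^ 2) := by
  rw [← Real.sqrt_mul (by positivity)]
  refine (le_abs_self _).trans (Real.abs_le_sqrt ?_)
  have key : (x ^ 2 + lam * y ^ 2) * (a ^ 2 + (1 / lam) * b ^ 2) - (x * a + y * b) ^ 2
      = (x * b - lam * y * a) ^ 2 / lam := by
    field_simp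
    ring
  rw [← sub_nonneg, key]
  positivity

theorem Real.sqrt_sq_add_mul_sq_add_le {lam : ℝ} (hlam : 0 ≤ lam) (A B A' B' : ℝ) :
    √((A + A') ^ 2 + lam * (B + B') ^ 2)
      ≤ √(A ^ 2 + lam * B ^ 2) + √(A' ^ 2 + lam * B' ^ 2) := by
  have hcs : A * A' + lam * (B * B') ≤ √(A ^ 2 + lam * B ^ 2) * √(A' ^ 2 + lam * B' ^ 2) := by
    rw [← Real.sqrt_mul (by positivity)]
    refine (le_abs_self _).trans (Real.abs_le_sqrt ?_)
    nlinarith [mul_nonneg hlam (sq_nonneg (A * B' - A' * B))]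
  rw [Real.sqrt_le_left (by positivity)]
  nlinarith [Real.sq_sqrt (show 0 ≤ A ^ 2 + lam * B ^ 2 by positivity),
    Real.sq_sqrt (show 0 ≤ A' ^ 2 + lam * B' ^ 2 by positivity)]

section PiSup

variable {ι : Type*} [Fintype ι] [Nonempty ι] {E : ι → Type*} {f φ : ∀ i, E i → ℝ}

def piSupNorm (f : ∀ i, E i → ℝ) (x : ∀ i, E i) : ℝ :=
  univ.sup' univ_nonempty fun i => f i (x i)

theorem le_piSupNorm (f : ∀ i, E i → ℝ) (x : ∀ i, E i) (i : ι) : f i (x i) ≤ piSupNorm f x :=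
  le_sup' (fun i => f i (x i)) (mem_univ i)

theorem piSupNorm_le_iff {x : ∀ i, E i} {c : ℝ} : piSupNorm f x ≤ c ↔ ∀ i, f i (x i) ≤ c := by
  simp [piSupNorm]

theorem piSupNorm_eq_of_forall_eq {x : ∀ i, E i} {c : ℝ} (h : ∀ i, f i (x i) = c) :
    piSupNorm f x = c := by
  simp [piSupNorm, h]

variable [∀ i, AddCommGroup (E i)] [∀ i, Module ℝ (E i)]

theorem isNorm_piSupNorm (hf : ∀ i, IsNorm (f i)) : IsNorm (piSupNorm f) where
  eq_zero_iff x := by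
    refine ⟨fun hx => funext fun i => ((hf i).eq_zero_iff _).1 ?_, ?_⟩
    · exact le_antisymm (hx ▸ le_piSupNorm f x i) ((hf i).nonneg _)
    · rintro rfl
      exact piSupNorm_eq_of_forall_eq fun i => (hf i).map_zero
  map_smul a x := by
    simp only [piSupNorm, Pi.smul_apply, (hf _).map_smul]
    exact (apply_sup'_eq_sup'_comp _ _ fun y z => mul_max_of_nonneg y z (abs_nonneg a)).symm
  map_add_le x y := piSupNorm_le_iff.2 fun i =>
    ((hf i).map_add_le _ _).trans (add_le_add (le_piSupNorm f x i) (le_piSupNorm f y i))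

theorem hasDualNorm_piSupNorm (hf : ∀ i, IsNorm (f i))
    (hφ : ∀ i (c : ℝ) u, φ i (c • u) = c * φ i u) {r : ι → ℝ}
    (hr : ∀ i, HasDualNorm (f i) (φ i) (r i)) :
    HasDualNorm (piSupNorm f) (fun x => ∑ i, φ i (x i)) (∑ i, r i) := by
  choose u hu hφu using fun i => (hr i).1
  refine ⟨⟨u, piSupNorm_eq_of_forall_eq hu, sum_congr rfl fun i _ => hφu i⟩, ?_⟩
  rintro s ⟨x, hx, rfl⟩
  refine sum_le_sum fun i _ => ?_
  calc φ i (x i) ≤ f i (x i) * r i := (hr i).le_mul (hf i) (hφ i) (x i)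
    _ ≤ 1 * r i := by
      gcongr
      · exact (hr i).nonneg (hf i) (hφ i)
      · exact hx ▸ le_piSupNorm f x i
    _ = r i := one_mul _

end PiSup

section ProdL2

variable {E F : Type*} [AddCommGroup E] [Module ℝ E] [AddCommGroup F] [Module ℝ F]
  {f φ : E → ℝ} {g ψ : F → ℝ} {lam : ℝ}

noncomputable def prodL2Norm (f : E → ℝ) (g : F → ℝ) (lam : ℝ) (P : E × F) : ℝ :=
  √(f P.1 ^ 2 + lam * g P.2 ^ 2)

theorem isNorm_prodL2Norm (hf : IsNorm f) (hg : IsNorm g) (hlam : 0 < lam) :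
    IsNorm (prodL2Norm f g lam) where
  eq_zero_iff P := by
    have hsq : ∀ a b : ℝ, a ^ 2 + lam * b ^ 2 = 0 ↔ a = 0 ∧ b = 0 := fun a b => by
      constructor
      · intro h
        have ha : a ^ 2 = 0 := by nlinarith [sq_nonneg a, sq_nonneg b]
        have hb : b ^ 2 = 0 := by nlinarith [sq_nonneg a, sq_nonneg b]
        exact ⟨pow_eq_zero_iff two_ne_zero |>.1 ha, pow_eq_zero_iff two_ne_zero |>.1 hb⟩
      · rintro ⟨rfl, rfl⟩
        ring
    rw [prodL2Norm, Real.sqrt_eq_zero (by positivity), hsq, hf.eq_zero_iff,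
      hg.eq_zero_iff, Prod.ext_iff, Prod.fst_zero, Prod.snd_zero]
  map_smul a P := by
    simp only [prodL2Norm, Prod.smul_fst, Prod.smul_snd, hf.map_smul, hg.map_smul]
    rw [mul_pow, mul_pow, sq_abs, ← Real.sqrt_sq_eq_abs, ← Real.sqrt_mul (sq_nonneg a)]
    ring_nf
  map_add_le P Q := calc
    prodL2Norm f g lam (P + Q) ≤ √((f P.1 + f Q.1) ^ 2 + lam * (g P.2 + g Q.2) ^ 2) := by
      have := hf.nonneg (P.1 + Q.1)
      have := hg.nonneg (P.2 + Q.2)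
      unfold prodL2Norm
      gcongr
      exacts [hf.map_add_le _ _, hg.map_add_le _ _]
    _ ≤ prodL2Norm f g lam P + prodL2Norm f g lam Q :=
      Real.sqrt_sq_add_mul_sq_add_le hlam.le _ _ _ _

theorem hasDualNorm_prodL2Norm (hf : IsNorm f) (hg : IsNorm g) (hlam : 0 < lam)
    (hφ : ∀ (c : ℝ) u, φ (c • u) = c * φ u) (hψ : ∀ (c : ℝ) v, ψ (c • v) = c * ψ v)
    {α β : ℝ} (hα : HasDualNorm f φ α) (hβ : HasDualNorm g ψ β) :
    HasDualNorm (prodL2Norm f g lam) (fun P => φ P.1 + ψ P.2)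
      (√(α ^ 2 + (1 / lam) * β ^ 2)) := by
  set D := √(α ^ 2 + (1 / lam) * β ^ 2)
  have hα0 := hα.nonneg hf hφ
  have hβ0 := hβ.nonneg hg hψ
  obtain ⟨u, hu, hφu⟩ := hα.1
  obtain ⟨v, hv, hψv⟩ := hβ.1
  have hle (P : E × F) : φ P.1 + ψ P.2 ≤ prodL2Norm f g lam P * D :=
    (add_le_add (hα.le_mul hf hφ P.1) (hβ.le_mul hg hψ P.2)).trans
      (Real.mul_add_mul_le_sqrt_mul_sqrt hlam _ _ _ _)
  have hN := isNorm_prodL2Norm hf hg hlam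
  have hhom (c : ℝ) (P : E × F) : φ (c • P).1 + ψ (c • P).2 = c * (φ P.1 + ψ P.2) := by
    rw [Prod.smul_fst, Prod.smul_snd, hφ, hψ, mul_add]
  rcases (Real.sqrt_nonneg _ : 0 ≤ D).eq_or_lt with hD0 | hDpos
  · replace hD0 : D = 0 := hD0.symm
    have hα0' : α = 0 := by
      have := Real.sqrt_eq_zero'.1 hD0
      nlinarith [mul_nonneg (one_div_pos.2 hlam).le (sq_nonneg β)]
    have hunit : prodL2Norm f g lam (u, 0) = 1 := by simp [prodL2Norm, hu, hg.map_zero]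
    refine .of_le_of_eq hN hhom hle (u := (u, 0)) (by rw [hunit]; exact one_ne_zero) ?_
    have hψ0 : ψ 0 = 0 := by simpa using hψ 0 0
    change φ u + ψ 0 = _
    rw [hunit, hφu, hψ0, hα0', hD0]
    ring
  · have hnorm : prodL2Norm f g lam (α • u, (β / lam) • v) = D := by
      rw [prodL2Norm, hf.map_smul, hg.map_smul, hu, hv, abs_of_nonneg hα0,
        abs_of_nonneg (div_nonneg hβ0 hlam.le)]
      congr 1
      field_simp
    refine .of_le_of_eq hN hhom hle (u := (α • u, (β / lam) • v)) (hnorm ▸ hDpos.ne') ?_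
    rw [hnorm, hφ, hψ, hφu, hψv, Real.mul_self_sqrt (by positivity)]
    field_simp

end ProdL2

/-- The MuonMax norm `h(W,θ) = sqrt((max_ℓ g_ℓ(W^ℓ))² + λ q(θ)²)` is a norm and
its dual is `h_*(M, m) = sqrt((Σ_ℓ g_{ℓ,*}(M^ℓ))² + (1/λ) q_*(m)²)`. -/
theorem stmt_18 {L p : ℕ} [NeZero L] (d : Fin L → ℕ)
    (g : ∀ ℓ : Fin L, (Fin (d ℓ) → ℝ) → ℝ)
    (hg : ∀ ℓ, (∀ x, g ℓ x = 0 ↔ x = 0) ∧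
      (∀ (a : ℝ) x, g ℓ (a • x) = |a| * g ℓ x) ∧
      (∀ x y, g ℓ (x + y) ≤ g ℓ x + g ℓ y))
    (q : (Fin p → ℝ) → ℝ)
    (hq : (∀ x, q x = 0 ↔ x = 0) ∧ (∀ (a : ℝ) x, q (a • x) = |a| * q x) ∧
      (∀ x y, q (x + y) ≤ q x + q y))
    (lam : ℝ) (hlam : 0 < lam)
    (M : ∀ ℓ : Fin L, Fin (d ℓ) → ℝ) (m : Fin p → ℝ)
    (gd : Fin L → ℝ)
    (hgd : ∀ ℓ, IsGreatest
      {r : ℝ | ∃ u : Fin (d ℓ) → ℝ, g ℓ u = 1 ∧ ∑ j, u j * M ℓ j = r} (gd ℓ))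
    (qd : ℝ)
    (hqd : IsGreatest {r : ℝ | ∃ u : Fin p → ℝ, q u = 1 ∧ ∑ j, u j * m j = r} qd) :
    let h : (∀ ℓ : Fin L, Fin (d ℓ) → ℝ) × (Fin p → ℝ) → ℝ := fun P =>
      Real.sqrt ((Finset.univ.sup' Finset.univ_nonempty
        (fun ℓ => g ℓ (P.1 ℓ))) ^ 2 + lam * (q P.2) ^ 2)
    ((∀ P, h P = 0 ↔ P = 0) ∧ (∀ (a : ℝ) P, h (a • P) = |a| * h P) ∧
        (∀ P Q, h (P + Q) ≤ h P + h Q)) ∧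
      IsGreatest
        {r : ℝ | ∃ P : (∀ ℓ : Fin L, Fin (d ℓ) → ℝ) × (Fin p → ℝ),
          h P = 1 ∧ (∑ ℓ, ∑ j, P.1 ℓ j * M ℓ j) + ∑ j, P.2 j * m j = r}
        (Real.sqrt ((∑ ℓ, gd ℓ) ^ 2 + (1 / lam) * qd ^ 2)) := by
  intro h
  have hgn (ℓ : Fin L) : IsNorm (g ℓ) := ⟨(hg ℓ).1, (hg ℓ).2.1, (hg ℓ).2.2⟩
  have hqn : IsNorm q := ⟨hq.1, hq.2.1, hq.2.2⟩
  have hsup := isNorm_piSupNorm hgn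
  have hh : IsNorm h := isNorm_prodL2Norm hsup hqn hlam
  have hdot {n : ℕ} (v : Fin n → ℝ) (c : ℝ) (u : Fin n → ℝ) :
      ∑ j, (c • u) j * v j = c * ∑ j, u j * v j := by
    simp only [Pi.smul_apply, smul_eq_mul, mul_sum, mul_assoc]
  refine ⟨⟨hh.eq_zero_iff, hh.map_smul, hh.map_add_le⟩, ?_⟩
  have hpair (c : ℝ) (x : ∀ ℓ, Fin (d ℓ) → ℝ) :
      ∑ ℓ, ∑ j, (c • x) ℓ j * M ℓ j = c * ∑ ℓ, ∑ j, x ℓ j * M ℓ j := by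
    simp only [Pi.smul_apply, ← hdot, mul_sum]
  exact hasDualNorm_prodL2Norm (φ := fun x : ∀ ℓ, Fin (d ℓ) → ℝ => ∑ ℓ, ∑ j, x ℓ j * M ℓ j)
    (ψ := fun u : Fin p → ℝ => ∑ j, u j * m j) hsup hqn hlam hpair (hdot m)
    (hasDualNorm_piSupNorm hgn (fun ℓ => hdot (M ℓ)) hgd) hqd
end
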